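/- arXiv:math/0410486 — 6 statements merged into one kernel-verified Lean document; each statement's English description precedes it below -/
import Mathlib

section
/- Let n = 2m+1 with m ≥ 1, and set p = (m+1)/2 if m is odd and p = (m+2)/2 if m is even. Define Ê_k = E_{2k,2k-1} + E_{n-2k+1,n-2k+2} for k ≠ p and Ê_p = E_{2p,2p-1}, and H_k^⊥ = ((4k-2)/n)·I_n − Σ_{u=1}^{2k-1}(E_{u,u} + E_{n-u+1,n-u+1}). Then [H_k^⊥, Ê_l] = δ_{kl} Ê_l for all k, l = 1, ..., m. -/
noncomputable def Eu (n i j : ℕ) : Matrix (Fin n) (Fin n) ℂ :=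
  Matrix.of fun a b => if (a : ℕ) + 1 = i ∧ (b : ℕ) + 1 = j then 1 else 0

noncomputable def Hperp (n k : ℕ) : Matrix (Fin n) (Fin n) ℂ :=
  (((4 * k - 2 : ℕ) : ℂ) / (n : ℂ)) • (1 : Matrix (Fin n) (Fin n) ℂ)
    - ∑ u ∈ Finset.Icc 1 (2 * k - 1), (Eu n u u + Eu n (n - u + 1) (n - u + 1))

/-- `p = (m+1)/2` for odd `m`, `p = (m+2)/2` for even `m`. -/
def pIdx (m : ℕ) : ℕ := if m % 2 = 1 then (m + 1) / 2 else (m + 2) / 2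

/-- `Ê_k = E_{2k,2k-1} + E_{n-2k+1,n-2k+2}` for `k ≠ p`, `Ê_p = E_{2p,2p-1}`. -/
noncomputable def Ehat (n p k : ℕ) : Matrix (Fin n) (Fin n) ℂ :=
  if k = p then Eu n (2 * p) (2 * p - 1)
  else Eu n (2 * k) (2 * k - 1) + Eu n (n - 2 * k + 1) (n - 2 * k + 2)

noncomputable def gco (n k x : ℕ) : ℂ :=
  (if x ≤ 2 * k - 1 then 1 else 0) + (if n + 2 ≤ x + 2 * k then 1 else 0)

lemma Hperp_eq (n k : ℕ) (hk : 1 ≤ k) (hkn : 2 * k - 1 ≤ n) :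
    Hperp n k = Matrix.diagonal (fun a : Fin n =>
      ((4 * k - 2 : ℕ) : ℂ) / (n : ℂ) - gco n k ((a : ℕ) + 1)) := by
  unfold Hperp gco
  ext a b
  by_cases hab : a = b
  · subst hab
    rw [Matrix.diagonal_apply_eq]
    simp only [Matrix.sub_apply, Matrix.smul_apply, Matrix.one_apply_eq, smul_eq_mul, mul_one,
      Matrix.sum_apply, Matrix.add_apply, Eu, Matrix.of_apply, and_self]
    congr 1
    rw [Finset.sum_add_distrib]
    have ha := a.isLt
    have h1 : ∑ u ∈ Finset.Icc 1 (2*k-1), (if (a:ℕ)+1 = u then (1:ℂ) else 0)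
        = if (a:ℕ)+1 ≤ 2*k-1 then 1 else 0 := by
      rw [Finset.sum_ite_eq]
      exact if_congr (by simp [Finset.mem_Icc]) rfl rfl
    have h2 : ∑ u ∈ Finset.Icc 1 (2*k-1), (if (a:ℕ)+1 = n - u + 1 then (1:ℂ) else 0)
        = if n + 2 ≤ (a:ℕ)+1 + 2*k then 1 else 0 := by
      have hcong : ∀ u ∈ Finset.Icc 1 (2*k-1),
          (if (a:ℕ)+1 = n - u + 1 then (1:ℂ) else 0) = if n - (a:ℕ) = u then 1 else 0 := by
        intro u hu
        rw [Finset.mem_Icc] at hu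
        exact if_congr (by omega) rfl rfl
      rw [Finset.sum_congr rfl hcong, Finset.sum_ite_eq]
      exact if_congr (by simp [Finset.mem_Icc]; omega) rfl rfl
    rw [h1, h2]
  · have hab' : (a:ℕ) ≠ (b:ℕ) := fun h => hab (Fin.ext h)
    rw [Matrix.diagonal_apply_ne _ hab]
    simp only [Matrix.sub_apply, Matrix.smul_apply, Matrix.one_apply_ne hab, smul_eq_mul,
      mul_zero, Matrix.sum_apply, Matrix.add_apply, Eu, Matrix.of_apply]
    rw [Finset.sum_eq_zero, sub_zero]
    intro u hu
    rw [if_neg (by omega), if_neg (by omega), add_zero]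

lemma lie_Eu (n k i j : ℕ) (hk : 1 ≤ k) (hkn : 2 * k - 1 ≤ n) :
    ⁅Hperp n k, Eu n i j⁆ = (gco n k j - gco n k i) • Eu n i j := by
  rw [Hperp_eq n k hk hkn]
  ext a b
  simp only [Ring.lie_def, Matrix.sub_apply, Matrix.diagonal_mul, Matrix.mul_diagonal,
    Matrix.smul_apply, Eu, Matrix.of_apply, smul_eq_mul]
  by_cases h : (a:ℕ)+1 = i ∧ (b:ℕ)+1 = j
  · obtain ⟨h1, h2⟩ := h
    subst h1; subst h2
    rw [if_pos ⟨rfl, rfl⟩]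
    ring
  · rw [if_neg h]
    ring

lemma co1 (m k l : ℕ) (hk1 : 1 ≤ k) (hk2 : k ≤ m) (hl1 : 1 ≤ l) (hl2 : l ≤ m) :
    gco (2*m+1) k (2*l - 1) - gco (2*m+1) k (2*l) = if k = l then 1 else 0 := by
  unfold gco
  split_ifs <;> first | (exfalso; omega) | norm_num

lemma co2 (m k l : ℕ) (hk1 : 1 ≤ k) (hk2 : k ≤ m) (hl1 : 1 ≤ l) (hl2 : l ≤ m) :
    gco (2*m+1) k (2*m+1 - 2*l + 2) - gco (2*m+1) k (2*m+1 - 2*l + 1)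
      = if k = l then 1 else 0 := by
  unfold gco
  split_ifs <;> first | (exfalso; omega) | norm_num

/-- For `n = 2m+1`, `m ≥ 1`: `[H_k^⊥, Ê_l] = δ_{kl} Ê_l` for all `k, l = 1, …, m`. -/
theorem stmt3 (m : ℕ) (hm : 1 ≤ m) (k l : ℕ)
    (hk1 : 1 ≤ k) (hk2 : k ≤ m) (hl1 : 1 ≤ l) (hl2 : l ≤ m) :
    ⁅Hperp (2 * m + 1) k, Ehat (2 * m + 1) (pIdx m) l⁆ =
      if k = l then Ehat (2 * m + 1) (pIdx m) l else 0 := by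
  have hkn : 2 * k - 1 ≤ 2 * m + 1 := by omega
  unfold Ehat
  by_cases hlp : l = pIdx m
  · rw [if_pos hlp, lie_Eu _ _ _ _ hk1 hkn]
    have hc : gco (2*m+1) k (2 * pIdx m - 1) - gco (2*m+1) k (2 * pIdx m)
        = if k = l then 1 else 0 := by
      subst hlp
      exact co1 m k (pIdx m) hk1 hk2 hl1 hl2
    rw [hc]
    split_ifs <;> simp
  · letI : LieRing (Matrix (Fin (2 * m + 1)) (Fin (2 * m + 1)) ℂ) := LieRing.ofAssociativeRing
    rw [if_neg hlp, lie_add, lie_Eu _ _ _ _ hk1 hkn, lie_Eu _ _ _ _ hk1 hkn,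
      co1 m k l hk1 hk2 hl1 hl2, co2 m k l hk1 hk2 hl1 hl2]
    split_ifs <;> simp
end

section
/- Let g be a Lie algebra and H, E, A, B ∈ g satisfy [H, E] = E, [A, B] = E, [H, A] = αA, [H, B] = (1−α)B for some scalar α, and [A, E] = [B, E] = 0. Then r = H ⊗ E − E ⊗ H + A ⊗ B − B ⊗ A satisfies the classical Yang–Baxter equation. -/
/-!
Write `r = H ∧ E + A ∧ B`. The CYBE expression is quadratic in `r`, so it splits into the
Jordanian part, the extension part and two cross terms. The Jordanian part vanishes because
`H` and `E` span a subalgebra, so it lies in the third exterior power of a plane. In the rest,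
`[A, E] = [B, E] = 0` kill most terms, and `ad H` acts on `A ∧ B` with total weight
`α + (1 - α) = 1`; the multiple of `E ∧ A ∧ B` this produces cancels the one that `[A, B] = E`
produces in the extension part.
-/

-- `cybe a b` is the left-hand side of the CYBE for `r = ∑ i, a i ⊗ b i`.
open TensorProduct in
noncomputable def cybe {R : Type*} [CommRing R] {g : Type*} [LieRing g] [LieAlgebra R g]
    {ι : Type*} [Fintype ι] (a b : ι → g) : g ⊗[R] (g ⊗[R] g) :=
  ∑ i, ∑ j,
    (⁅a i, a j⁆ ⊗ₜ[R] (b i ⊗ₜ[R] b j) + a i ⊗ₜ[R] (⁅b i, a j⁆ ⊗ₜ[R] b j)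
      + a i ⊗ₜ[R] (a j ⊗ₜ[R] ⁅b i, b j⁆))

open TensorProduct

section

variable {R : Type*} [CommRing R] {g : Type*} [LieRing g] [LieAlgebra R g]
  {ι κ : Type*} [Fintype ι] [Fintype κ]

noncomputable def cybeCross (a b : ι → g) (a' b' : κ → g) : g ⊗[R] (g ⊗[R] g) :=
  ∑ i, ∑ j,
    (⁅a i, a' j⁆ ⊗ₜ[R] (b i ⊗ₜ[R] b' j) + a i ⊗ₜ[R] (⁅b i, a' j⁆ ⊗ₜ[R] b' j)
      + a i ⊗ₜ[R] (a' j ⊗ₜ[R] ⁅b i, b' j⁆))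

theorem cybe_comp_equiv (e : κ ≃ ι) (a b : ι → g) :
    cybe (R := R) (a ∘ e) (b ∘ e) = cybe a b := by
  simp only [cybe, Function.comp_apply]
  exact Fintype.sum_equiv e _ _ fun i => Fintype.sum_equiv e _ _ fun j => rfl

theorem cybe_sumElim (a b : ι → g) (a' b' : κ → g) :
    cybe (R := R) (Sum.elim a a') (Sum.elim b b') =
      cybe a b + cybeCross a b a' b' + cybeCross a' b' a b + cybe a' b' := by
  simp only [cybe, cybeCross, Fintype.sum_sum_type, Sum.elim_inl, Sum.elim_inr,
    Finset.sum_add_distrib]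
  abel

theorem cybe_wedge_eq_zero_of_lie_eq {H E : g} (c d : R) (hHE : ⁅H, E⁆ = c • H + d • E) :
    cybe (R := R) ![H, -E] ![E, H] = 0 := by
  have hEH : ⁅E, H⁆ = -(c • H + d • E) := by rw [← lie_skew, hHE]
  simp only [cybe, Fin.sum_univ_two, Matrix.cons_val_zero, Matrix.cons_val_one,
    lie_neg, neg_lie, lie_self, hHE, hEH, neg_neg, neg_zero, tmul_neg, neg_tmul, tmul_zero,
    zero_tmul, add_tmul, tmul_add, smul_tmul, tmul_smul]
  module

theorem cybeCross_add_cybe_extension_eq_zero {H E A B : g} {α : R} (hAB : ⁅A, B⁆ = E)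
    (hHA : ⁅H, A⁆ = α • A) (hHB : ⁅H, B⁆ = (1 - α) • B)
    (hAE : ⁅A, E⁆ = 0) (hBE : ⁅B, E⁆ = 0) :
    cybeCross (R := R) ![H, -E] ![E, H] ![A, -B] ![B, A] +
      cybeCross ![A, -B] ![B, A] ![H, -E] ![E, H] + cybe ![A, -B] ![B, A] = 0 := by
  have hBA : ⁅B, A⁆ = -E := by rw [← lie_skew, hAB]
  have hAH : ⁅A, H⁆ = -(α • A) := by rw [← lie_skew, hHA]
  have hBH : ⁅B, H⁆ = -((1 - α) • B) := by rw [← lie_skew, hHB]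
  have hEA : ⁅E, A⁆ = 0 := by rw [← lie_skew, hAE, neg_zero]
  have hEB : ⁅E, B⁆ = 0 := by rw [← lie_skew, hBE, neg_zero]
  simp only [cybe, cybeCross, Fin.sum_univ_two, Matrix.cons_val_zero, Matrix.cons_val_one,
    lie_neg, neg_lie, lie_self, hAB, hHA, hHB, hAE, hBE, hBA, hAH, hBH, hEA, hEB,
    neg_neg, tmul_neg, neg_tmul, tmul_zero, zero_tmul, smul_tmul, tmul_smul, neg_zero]
  module

end

/-- If `[H,E] = E`, `[A,B] = E`, `[H,A] = αA`, `[H,B] = (1−α)B` and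
`[A,E] = [B,E] = 0`, then `r = H ⊗ E − E ⊗ H + A ⊗ B − B ⊗ A` satisfies the
classical Yang–Baxter equation.  The skew `r` is encoded by the coefficient
family `a = (H, −E, A, −B)`, `b = (E, H, B, A)`. -/
theorem stmt7 {R : Type*} [CommRing R] {g : Type*} [LieRing g] [LieAlgebra R g]
    (H E A B : g) (α : R)
    (hHE : ⁅H, E⁆ = E) (hAB : ⁅A, B⁆ = E)
    (hHA : ⁅H, A⁆ = α • A) (hHB : ⁅H, B⁆ = (1 - α) • B)
    (hAE : ⁅A, E⁆ = 0) (hBE : ⁅B, E⁆ = 0) :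
    cybe (R := R) ![H, -E, A, -B] ![E, H, B, A] = 0 := by
  have split (x y z w : g) :
      ![x, y, z, w] = Sum.elim ![x, y] ![z, w] ∘ finSumFinEquiv.symm := by
    ext i; fin_cases i <;> rfl
  have hJordan : cybe (R := R) ![H, -E] ![E, H] = 0 :=
    cybe_wedge_eq_zero_of_lie_eq 0 1 (by rw [hHE, zero_smul, one_smul, zero_add])
  rw [split, split, cybe_comp_equiv, cybe_sumElim, hJordan, zero_add,
    cybeCross_add_cybe_extension_eq_zero hAB hHA hHB hAE hBE]
end

section
/- In sl(3, ℂ), let r_{rch} = 2H_{12} ∧ E_{13} + E_{12} ∧ E_{23} with H_{12} = (1/2)(E_{11} − E_{33}), and let H^⊥ = −(1/3)(E_{11} − 2E_{22} + E_{33}). Then the sum r_{rch} + H^⊥ ∧ E_{21} does NOT satisfy the classical Yang–Baxter equation: its Schouten bracket [r_{12}, r_{13}] + [r_{12}, r_{23}] + [r_{13}, r_{23}] is nonzero. -/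
attribute [local instance 100] LieRing.ofAssociativeRing

noncomputable def ent (i j : Fin 3) : Matrix (Fin 3) (Fin 3) ℂ →ₗ[ℂ] ℂ where
  toFun m := m i j
  map_add' _ _ := rfl
  map_smul' _ _ := rfl

lemma ent_apply (i j : Fin 3) (m : Matrix (Fin 3) (Fin 3) ℂ) : ent i j m = m i j := rfl

open TensorProduct in
noncomputable def phi2 : Matrix (Fin 3) (Fin 3) ℂ ⊗[ℂ] Matrix (Fin 3) (Fin 3) ℂ →ₗ[ℂ] ℂ :=
  TensorProduct.lift (((LinearMap.mul ℂ ℂ).comp (ent 0 2)).compl₂ (ent 1 2))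

open TensorProduct in
noncomputable def phi : Matrix (Fin 3) (Fin 3) ℂ ⊗[ℂ]
    (Matrix (Fin 3) (Fin 3) ℂ ⊗[ℂ] Matrix (Fin 3) (Fin 3) ℂ) →ₗ[ℂ] ℂ :=
  TensorProduct.lift (((LinearMap.mul ℂ ℂ).comp (ent 0 1)).compl₂ phi2)

lemma cons5 {α : Type*} (a b c d e f : α) : ![a,b,c,d,e,f] (5 : Fin 6) = f := rfl

set_option maxHeartbeats 2000000 in
set_option synthInstance.maxHeartbeats 200000 in
/-- In `sl(3,ℂ)`, the sum `r_{rch} + H^⊥ ∧ E₂₁` of the rotated chain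
`r_{rch} = 2H₁₂ ∧ E₁₃ + E₁₂ ∧ E₂₃` (with `H₁₂ = (1/2)(E₁₁−E₃₃)`) and the
Jordanian term with `H^⊥ = −(1/3)(E₁₁ − 2E₂₂ + E₃₃)` does NOT satisfy the
classical Yang–Baxter equation: its Schouten bracket is nonzero. -/
theorem stmt9 (H12 Hperp : Matrix (Fin 3) (Fin 3) ℂ)
    (hH : H12 = (1 / 2 : ℂ) • (Eu 3 1 1 - Eu 3 3 3))
    (hP : Hperp = -(1 / 3 : ℂ) • (Eu 3 1 1 - (2 : ℂ) • Eu 3 2 2 + Eu 3 3 3)) :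
    cybe (R := ℂ)
      ![(2 : ℂ) • H12, -((2 : ℂ) • Eu 3 1 3), Eu 3 1 2, -(Eu 3 2 3),
        Hperp, -(Eu 3 2 1)]
      ![Eu 3 1 3, H12, Eu 3 2 3, Eu 3 1 2, Eu 3 2 1, Hperp] ≠ 0 := by
  intro h
  have h2 := congrArg phi h
  rw [phi.map_zero] at h2
  subst hH hP
  simp only [cybe, Fin.sum_univ_six, map_add, Matrix.cons_val_zero, Matrix.cons_val_one,
    Matrix.head_cons, Matrix.cons_val_two, Matrix.tail_cons, Matrix.cons_val_three,
    Matrix.cons_val_four, Matrix.cons_val_fin_one, Matrix.cons_val_succ, cons5] at h2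
  simp only [phi, phi2, TensorProduct.lift.tmul, LinearMap.compl₂_apply, LinearMap.comp_apply,
    LinearMap.mul_apply', ent_apply, LinearMap.coe_mk, AddHom.coe_mk, Ring.lie_def, Eu,
    Matrix.sub_apply, Matrix.add_apply, Matrix.smul_apply, Matrix.neg_apply,
    Matrix.mul_apply, Fin.sum_univ_three, Matrix.of_apply, smul_eq_mul, Pi.smul_apply,
    Pi.sub_apply, Pi.add_apply, Pi.neg_apply, Fin.val_zero, Fin.val_one, Fin.val_two] at h2
  norm_num at h2
end

section
/- Let n = 2m+1 and define, for k = 1, ..., m, the n×n matrix Ĥ_k = (−1)^{k+1}·[ ((2k−1)/n)·I_n − Σ_{j=1}^{k−1}(E_{j,j} + E_{n−j+1,n−j+1}) + (1/2)((−1)^{k+1}(E_{k,k} − E_{n−k+1,n−k+1}) − E_{k,k} − E_{n−k+1,n−k+1}) ]. Then [Ĥ_k, E_{l,n−l+1}] = δ_{kl} E_{l,n−l+1} for all k, l = 1, ..., m. -/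
/-- The Cartan factor `Ĥ_k` of the enlarged chain for `sl(n)`, `n = 2m+1`. -/
noncomputable def Hhat (n k : ℕ) : Matrix (Fin n) (Fin n) ℂ :=
  ((-1 : ℂ) ^ (k + 1)) •
    ((((2 * k - 1 : ℕ) : ℂ) / (n : ℂ)) • (1 : Matrix (Fin n) (Fin n) ℂ)
      - ∑ j ∈ Finset.Icc 1 (k - 1), (Eu n j j + Eu n (n - j + 1) (n - j + 1))
      + (1 / 2 : ℂ) •
          (((-1 : ℂ) ^ (k + 1)) • (Eu n k k - Eu n (n - k + 1) (n - k + 1))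
            - Eu n k k - Eu n (n - k + 1) (n - k + 1)))

lemma sum_prod' (n u v : ℕ) (C D : Prop) [Decidable C] [Decidable D] :
    (∑ r : Fin n, (if C ∧ (r : ℕ) + 1 = u then (1:ℂ) else 0) *
      (if (r : ℕ) + 1 = v ∧ D then 1 else 0))
    = if C ∧ D ∧ u = v ∧ 1 ≤ u ∧ u ≤ n then 1 else 0 := by
  by_cases h : C ∧ D ∧ u = v ∧ 1 ≤ u ∧ u ≤ n
  · obtain ⟨hC, hD, huv, h1, h2⟩ := h
    rw [if_pos ⟨hC, hD, huv, h1, h2⟩,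
      Finset.sum_eq_single (⟨u - 1, by omega⟩ : Fin n)]
    · rw [if_pos ⟨hC, by simp; omega⟩, if_pos ⟨by simp; omega, hD⟩, one_mul]
    · intro r _ hr
      rw [if_neg, zero_mul]
      rintro ⟨-, hru⟩
      exact hr (Fin.ext (by simp; omega))
    · intro h'; exact absurd (Finset.mem_univ _) h'
  · rw [if_neg h]
    apply Finset.sum_eq_zero
    intro r _
    by_cases hC : C ∧ (r : ℕ) + 1 = u
    · rw [if_pos hC, one_mul, if_neg]
      rintro ⟨hrv, hD⟩
      exact h ⟨hC.1, hD, by omega, by omega, by have := r.isLt; omega⟩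
    · rw [if_neg hC, zero_mul]

lemma lie_diag (n i a b : ℕ) :
    ⁅Eu n i i, Eu n a b⁆ =
      (((if i = a then (1:ℂ) else 0) - (if i = b then 1 else 0))) • Eu n a b := by
  ext p q
  have hp := p.isLt; have hq := q.isLt
  simp only [Ring.lie_def, Matrix.sub_apply, Matrix.mul_apply, Matrix.smul_apply, Eu,
    Matrix.of_apply, smul_eq_mul]
  rw [sum_prod' n i a _ _, sum_prod' n b i _ _]
  split_ifs <;> (try omega) <;> norm_num

/-- For `n = 2m+1`: `[Ĥ_k, E_{l,n−l+1}] = δ_{kl} E_{l,n−l+1}` for `k, l = 1, …, m`. -/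
theorem stmt11 (m k l : ℕ) (hk1 : 1 ≤ k) (hk2 : k ≤ m) (hl1 : 1 ≤ l) (hl2 : l ≤ m) :
    ⁅Hhat (2 * m + 1) k, Eu (2 * m + 1) l ((2 * m + 1) - l + 1)⁆ =
      if k = l then Eu (2 * m + 1) l ((2 * m + 1) - l + 1) else 0 := by
  set n := 2 * m + 1 with hn
  letI : LieRing (Matrix (Fin n) (Fin n) ℂ) := LieRing.ofAssociativeRing
  set X := Eu n l (n - l + 1) with hX
  set s : ℂ := (-1 : ℂ) ^ (k + 1) with hs
  have hss : s * s = 1 := by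
    rw [hs, ← pow_add, ← two_mul, pow_mul]; norm_num
  have sumlie : ∀ (t : Finset ℕ) (f : ℕ → Matrix (Fin n) (Fin n) ℂ)
      (Y : Matrix (Fin n) (Fin n) ℂ), ⁅∑ j ∈ t, f j, Y⁆ = ∑ j ∈ t, ⁅f j, Y⁆ := by
    intros t f Y
    simp [Ring.lie_def, Finset.sum_mul, Finset.mul_sum, Finset.sum_sub_distrib]
  have hone : ⁅(((2 * k - 1 : ℕ) : ℂ) / (n : ℂ)) • (1 : Matrix (Fin n) (Fin n) ℂ), X⁆ = 0 := by
    simp [Ring.lie_def, Matrix.smul_mul, Matrix.mul_smul]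
  have hsum : ⁅∑ j ∈ Finset.Icc 1 (k - 1), (Eu n j j + Eu n (n - j + 1) (n - j + 1)), X⁆
      = 0 := by
    rw [sumlie]
    apply Finset.sum_eq_zero
    intro j hj
    simp only [Finset.mem_Icc] at hj
    rw [add_lie, hX, lie_diag, lie_diag]
    have h1 : j ≠ n - l + 1 := by omega
    have h2 : ¬ (n - j + 1 = l) := by omega
    have h3 : (n - j + 1 = n - l + 1) ↔ (j = l) := by omega
    rw [if_neg h1, if_neg h2]
    by_cases hjl : j = l
    · rw [if_pos hjl, if_pos (h3.mpr hjl)]; module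
    · rw [if_neg hjl, if_neg (fun hc => hjl (h3.mp hc))]; simp
  have hk' : ⁅Eu n k k, X⁆ = (if k = l then (1:ℂ) else 0) • X := by
    rw [hX, lie_diag]
    have : ¬ (k = n - l + 1) := by omega
    rw [if_neg this, sub_zero]
  have hK' : ⁅Eu n (n - k + 1) (n - k + 1), X⁆ = -((if k = l then (1:ℂ) else 0) • X) := by
    rw [hX, lie_diag]
    have h2 : ¬ (n - k + 1 = l) := by omega
    have h3 : (n - k + 1 = n - l + 1) ↔ (k = l) := by omega
    rw [if_neg h2]
    by_cases hkl : k = l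
    · rw [if_pos (h3.mpr hkl), if_pos hkl]; simp
    · rw [if_neg (fun hc => hkl (h3.mp hc)), if_neg hkl]; simp
  have hrhs : (if k = l then X else 0) = (if k = l then (1:ℂ) else 0) • X := by
    split_ifs <;> simp
  rw [Hhat, hrhs, smul_lie, add_lie, sub_lie, hone, hsum,
    smul_lie, sub_lie, sub_lie, smul_lie, sub_lie, hk', hK']
  match_scalars
  linear_combination (if k = l then (1:ℂ) else 0) * hss
end

section
/- Let n = 2m+1, H_{k,n−k+1} = E_{k,k} − E_{n−k+1,n−k+1}, and H̃_k^⊥ = Σ_{j=k}^{n−k} (−1)^{j+1}(E_{j,j} − E_{j+1,j+1}). Then the linear span of {H_{k,n−k+1} + H̃_k^⊥ : k = 1, ..., m} over ℂ contains each of the Cartan elements H_{2k−1,2k} = E_{2k−1,2k−1} − E_{2k,2k} for k = 1, ..., m. -/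
noncomputable def Htilde (n i : ℕ) : Matrix (Fin n) (Fin n) ℂ :=
  ∑ j ∈ Finset.Icc i (n - i), ((-1 : ℂ) ^ (j + 1)) • (Eu n j j - Eu n (j + 1) (j + 1))

/-!
All matrices involved are diagonal. Writing `S(a, b) = ∑_{p=a}^{b} (-1)^(p+1) E_{p,p}`, the
boundary terms of the telescoping sum `H̃_j^⊥` either cancel or double those of `H_{j,n-j+1}`, so
the generator `X_j = H_{j,n-j+1} + H̃_j^⊥` is `2 S(j, n-j)` for odd `j` and `2 S(j+1, n-j+1)` for
even `j`. Hence `2 H_{2k-1,2k}` is `X_{2k-1} - X_{2k}` when `2k ≤ m`, is `X_m` when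
`2k ∈ {m+1, m+2}`, and is `X_{2t} - X_{2t+1}` with `t = m+1-k` otherwise.
-/

open Matrix

lemma Eu_self_eq_diagonal (n i : ℕ) :
    Eu n i i = diagonal fun p : Fin n => if (p : ℕ) + 1 = i then 1 else 0 := by
  ext a b
  simp only [Eu, of_apply, diagonal_apply, Fin.ext_iff]
  split_ifs <;> first | rfl | omega

lemma Htilde_eq_diagonal (n i : ℕ) :
    Htilde n i = diagonal fun p : Fin n => (-1) ^ (p : ℕ) *
      ((if i ≤ (p : ℕ) + 1 ∧ (p : ℕ) + 1 ≤ n - i then 1 else 0) +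
        if i ≤ (p : ℕ) ∧ (p : ℕ) ≤ n - i then 1 else 0) := by
  ext a b
  rcases eq_or_ne a b with rfl | hab
  · simp only [Htilde, Eu_self_eq_diagonal, diagonal_sub, ← diagonal_smul, Matrix.sum_apply,
      diagonal_apply_eq, Pi.smul_apply, smul_eq_mul, mul_sub, Finset.sum_sub_distrib, mul_ite,
      mul_one, mul_zero, Nat.add_right_cancel_iff, Finset.sum_ite_eq, Finset.mem_Icc]
    split_ifs <;> ring
  · simp [Htilde, Eu_self_eq_diagonal, Matrix.sum_apply, diagonal_apply_ne _ hab]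

/-- `altDiag n a b = ∑_{p=a}^{b} (-1)^(p+1) E_{p,p}`, with `a, b` one-based as in `Eu`. -/
def altDiag (n a b : ℕ) : Matrix (Fin n) (Fin n) ℂ :=
  diagonal fun p : Fin n => if a ≤ (p : ℕ) + 1 ∧ (p : ℕ) + 1 ≤ b then (-1) ^ (p : ℕ) else 0

noncomputable def cartanGenerator (n j : ℕ) : Matrix (Fin n) (Fin n) ℂ :=
  (Eu n j j - Eu n (n - j + 1) (n - j + 1)) + Htilde n j

lemma cartanGenerator_of_odd {m j b : ℕ} (hj : Odd j) (hjm : j ≤ m) (hb : j + b = 2 * m + 1) :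
    cartanGenerator (2 * m + 1) j = (2 : ℂ) • altDiag (2 * m + 1) j b := by
  simp only [cartanGenerator, altDiag, Eu_self_eq_diagonal, Htilde_eq_diagonal, diagonal_sub,
    diagonal_add, ← diagonal_smul]
  congr 1
  funext p
  obtain ⟨i, rfl⟩ := hj
  rcases Nat.even_or_odd (p : ℕ) with hp | hp <;>
    simp only [Pi.smul_apply, smul_eq_mul, hp.neg_one_pow, Nat.even_iff, Nat.odd_iff] at hp ⊢ <;>
    split_ifs <;> first | omega | norm_num

lemma cartanGenerator_of_even {m j b : ℕ} (hj : Even j) (hjm : j ≤ m) (hb : j + b = 2 * m + 2) :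
    cartanGenerator (2 * m + 1) j = (2 : ℂ) • altDiag (2 * m + 1) (j + 1) b := by
  simp only [cartanGenerator, altDiag, Eu_self_eq_diagonal, Htilde_eq_diagonal, diagonal_sub,
    diagonal_add, ← diagonal_smul]
  congr 1
  funext p
  obtain ⟨i, rfl⟩ := hj
  rcases Nat.even_or_odd (p : ℕ) with hp | hp <;>
    simp only [Pi.smul_apply, smul_eq_mul, hp.neg_one_pow, Nat.even_iff, Nat.odd_iff] at hp ⊢ <;>
    split_ifs <;> first | omega | norm_num

lemma altDiag_eq_zero {n a b : ℕ} (h : b < a) : altDiag n a b = 0 := by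
  rw [altDiag, ← diagonal_zero]
  congr 1
  funext p
  exact if_neg (by omega)

lemma altDiag_sub_altDiag_add_two {n a b : ℕ} (ha : Odd a) (hab : a < b) :
    altDiag n a b - altDiag n (a + 2) b = Eu n a a - Eu n (a + 1) (a + 1) := by
  simp only [altDiag, Eu_self_eq_diagonal, diagonal_sub]
  congr 1
  funext p
  obtain ⟨i, rfl⟩ := ha
  rcases Nat.even_or_odd (p : ℕ) with hp | hp <;>
    simp only [hp.neg_one_pow, Nat.even_iff, Nat.odd_iff] at hp ⊢ <;>
    split_ifs <;> first | omega | norm_num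

lemma altDiag_sub_altDiag_sub_two {n a b : ℕ} (hab : a < b) (hb : Even b) :
    altDiag n a b - altDiag n a (b - 2) = Eu n (b - 1) (b - 1) - Eu n b b := by
  simp only [altDiag, Eu_self_eq_diagonal, diagonal_sub]
  congr 1
  funext p
  obtain ⟨i, rfl⟩ := hb
  rcases Nat.even_or_odd (p : ℕ) with hp | hp <;>
    simp only [hp.neg_one_pow, Nat.even_iff, Nat.odd_iff] at hp ⊢ <;>
    split_ifs <;> first | omega | norm_num

lemma altDiag_self_add_one {n a : ℕ} (ha : Odd a) :
    altDiag n a (a + 1) = Eu n a a - Eu n (a + 1) (a + 1) := by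
  rw [← altDiag_sub_altDiag_add_two (b := a + 1) ha (by omega),
    altDiag_eq_zero (a := a + 2) (by omega), sub_zero]

lemma cartanGenerator_middle {m a : ℕ} (ha : Odd a) (hma : m ≤ a) (ham : a ≤ m + 1) :
    cartanGenerator (2 * m + 1) m = (2 : ℂ) • altDiag (2 * m + 1) a (a + 1) := by
  have ha2 := Nat.odd_iff.1 ha
  rcases Nat.even_or_odd m with hm | hm
  · have hm2 := Nat.even_iff.1 hm
    rw [cartanGenerator_of_even hm le_rfl (b := a + 1) (by omega), show m + 1 = a by omega]
  · obtain rfl : a = m := by have := Nat.odd_iff.1 hm; omega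
    exact cartanGenerator_of_odd hm le_rfl (by omega)

def cartanGenerators (m : ℕ) : Set (Matrix (Fin (2 * m + 1)) (Fin (2 * m + 1)) ℂ) :=
  {M | ∃ j, 1 ≤ j ∧ j ≤ m ∧ M = cartanGenerator (2 * m + 1) j}

/-- For `n = 2m+1`, the span of `{H_{k,n−k+1} + H̃_k^⊥ : k = 1, …, m}` contains
each Cartan element `H_{2k−1,2k} = E_{2k−1,2k−1} − E_{2k,2k}`, `k = 1, …, m`. -/
theorem stmt14 (m k : ℕ) (hk1 : 1 ≤ k) (hk2 : k ≤ m) :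
    Eu (2 * m + 1) (2 * k - 1) (2 * k - 1) - Eu (2 * m + 1) (2 * k) (2 * k) ∈
      Submodule.span ℂ
        {M : Matrix (Fin (2 * m + 1)) (Fin (2 * m + 1)) ℂ |
          ∃ j, 1 ≤ j ∧ j ≤ m ∧
            M = (Eu (2 * m + 1) j j
                  - Eu (2 * m + 1) ((2 * m + 1) - j + 1) ((2 * m + 1) - j + 1))
                + Htilde (2 * m + 1) j} := by
  change _ ∈ Submodule.span ℂ (cartanGenerators m)
  have mem : ∀ j, 1 ≤ j → j ≤ m →
      cartanGenerator (2 * m + 1) j ∈ Submodule.span ℂ (cartanGenerators m) :=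
    fun j hj1 hjm => Submodule.subset_span ⟨j, hj1, hjm, rfl⟩
  obtain ⟨a, ha, h2k_sub_one, h2k⟩ : ∃ a, Odd a ∧ 2 * k - 1 = a ∧ 2 * k = a + 1 :=
    ⟨2 * k - 1, ⟨k - 1, by omega⟩, rfl, by omega⟩
  rw [h2k_sub_one, h2k, ← Submodule.smul_mem_iff _ (two_ne_zero : (2 : ℂ) ≠ 0)]
  have ha2 := Nat.odd_iff.1 ha
  rcases le_or_gt (a + 1) m with hlow | hhigh
  · have h := sub_mem (mem a (by omega) (by omega)) (mem (a + 1) (by omega) hlow)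
    rwa [cartanGenerator_of_odd ha (by omega) (b := 2 * m + 1 - a) (by omega),
      cartanGenerator_of_even ha.add_one hlow (b := 2 * m + 1 - a) (by omega), ← smul_sub,
      show a + 1 + 1 = a + 2 from rfl, altDiag_sub_altDiag_add_two ha (by omega)] at h
  rcases le_or_gt a (m + 1) with hmid | hhigh'
  · rw [← altDiag_self_add_one ha, ← cartanGenerator_middle ha (by omega) hmid]
    exact mem m (by omega) le_rfl
  · obtain ⟨t, ht⟩ : ∃ t, a + 2 * t = 2 * m + 1 := ⟨(2 * m + 1 - a) / 2, by omega⟩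
    have h := sub_mem (mem (2 * t) (by omega) (by omega)) (mem (2 * t + 1) (by omega) (by omega))
    rwa [cartanGenerator_of_even (even_two_mul t) (by omega) (b := a + 1) (by omega),
      cartanGenerator_of_odd (even_two_mul t).add_one (by omega) (b := a + 1 - 2) (by omega),
      ← smul_sub, altDiag_sub_altDiag_sub_two (by omega) ha.add_one, Nat.add_sub_cancel] at h
end

section
/- In sl(11, ℂ), define H_k^⊥ = ((4k−2)/11)·I_{11} − Σ_{u=1}^{2k−1}(E_{u,u} + E_{12−u,12−u}) for k = 1, ..., 5, and Ê_1 = E_{2,1}+E_{10,11}, Ê_2 = E_{4,3}+E_{8,9}, Ê_3 = E_{6,5}, Ê_4 = E_{8,7}+E_{4,5}, Ê_5 = E_{10,9}+E_{2,3}. Then the element r_J = Σ_{k=1}^5 (H_k^⊥ ⊗ Ê_k − Ê_k ⊗ H_k^⊥) satisfies the classical Yang–Baxter equation. -/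
/-- The dual Jordanian coordinates `Ê₁, …, Ê₅` for `sl(11)`. -/
noncomputable def Eh : Fin 5 → Matrix (Fin 11) (Fin 11) ℂ :=
  ![Eu 11 2 1 + Eu 11 10 11, Eu 11 4 3 + Eu 11 8 9, Eu 11 6 5,
    Eu 11 8 7 + Eu 11 4 5, Eu 11 10 9 + Eu 11 2 3]

/-- The orthogonal Cartan elements `H₁^⊥, …, H₅^⊥` for `sl(11)`. -/
noncomputable def Hp : Fin 5 → Matrix (Fin 11) (Fin 11) ℂ :=
  fun k => Hperp 11 ((k : ℕ) + 1)

attribute [local instance] LieRing.ofAssociativeRing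

lemma Eu_mul_Eu (n i j k l : ℕ) :
    Eu n i j * Eu n k l = if j = k ∧ 1 ≤ j ∧ j ≤ n then Eu n i l else 0 := by
  ext a b
  by_cases h : j = k ∧ 1 ≤ j ∧ j ≤ n
  · obtain ⟨rfl, h1, h2⟩ := h
    rw [if_pos (⟨rfl, h1, h2⟩ : j = j ∧ 1 ≤ j ∧ j ≤ n)]
    simp only [Eu, Matrix.mul_apply, Matrix.of_apply]
    rw [Finset.sum_eq_single (⟨j - 1, by omega⟩ : Fin n)]
    · simp only [Matrix.of_apply]
      have : (j - 1) + 1 = j := by omega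
      by_cases ha : (a:ℕ) + 1 = i <;> by_cases hb : (b:ℕ)+1 = l <;>
        simp [ha, hb, this]
    · intro c _ hc
      have : (c:ℕ) + 1 ≠ j := by
        intro hcj; apply hc; apply Fin.ext; simp; omega
      simp [this]
    · simp
  · rw [if_neg h]
    simp only [Eu, Matrix.mul_apply, Matrix.of_apply, Matrix.zero_apply]
    apply Finset.sum_eq_zero
    intro c _
    by_cases hj : (c:ℕ) + 1 = j
    · have hk : (c:ℕ) + 1 ≠ k := by
        intro hkk
        exact h ⟨by omega, by omega, by have := c.isLt; omega⟩
      simp [hk]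
    · simp [hj]

lemma Hp0 : Hp 0 = ((2:ℂ)/11) • 1 - (Eu 11 1 1 + Eu 11 11 11) := by
  have h : Finset.Icc 1 1 = ({1} : Finset ℕ) := by decide
  simp [Hp, Hperp, h]

lemma Hp1 : Hp 1 = ((6:ℂ)/11) • 1 -
    ((Eu 11 1 1 + Eu 11 11 11) + (Eu 11 2 2 + Eu 11 10 10) + (Eu 11 3 3 + Eu 11 9 9)) := by
  have h : Finset.Icc 1 3 = ({1,2,3} : Finset ℕ) := by decide
  simp [Hp, Hperp, show (((1:Fin 5)):ℕ) = 1 from rfl, h, Finset.sum_insert,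
    Finset.mem_insert, Finset.mem_singleton]
  abel

lemma Hp2 : Hp 2 = ((10:ℂ)/11) • 1 -
    ((Eu 11 1 1 + Eu 11 11 11) + (Eu 11 2 2 + Eu 11 10 10) + (Eu 11 3 3 + Eu 11 9 9)
      + (Eu 11 4 4 + Eu 11 8 8) + (Eu 11 5 5 + Eu 11 7 7)) := by
  have h : Finset.Icc 1 5 = ({1,2,3,4,5} : Finset ℕ) := by decide
  simp [Hp, Hperp, show (((2:Fin 5)):ℕ) = 2 from rfl, h, Finset.sum_insert,
    Finset.mem_insert, Finset.mem_singleton]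
  abel

lemma Hp3 : Hp 3 = ((14:ℂ)/11) • 1 -
    ((Eu 11 1 1 + Eu 11 11 11) + (Eu 11 2 2 + Eu 11 10 10) + (Eu 11 3 3 + Eu 11 9 9)
      + (Eu 11 4 4 + Eu 11 8 8) + (Eu 11 5 5 + Eu 11 7 7) + (Eu 11 6 6 + Eu 11 6 6)
      + (Eu 11 7 7 + Eu 11 5 5)) := by
  have h : Finset.Icc 1 7 = ({1,2,3,4,5,6,7} : Finset ℕ) := by decide
  simp [Hp, Hperp, show (((3:Fin 5)):ℕ) = 3 from rfl, h, Finset.sum_insert,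
    Finset.mem_insert, Finset.mem_singleton]
  abel

lemma Hp4 : Hp 4 = ((18:ℂ)/11) • 1 -
    ((Eu 11 1 1 + Eu 11 11 11) + (Eu 11 2 2 + Eu 11 10 10) + (Eu 11 3 3 + Eu 11 9 9)
      + (Eu 11 4 4 + Eu 11 8 8) + (Eu 11 5 5 + Eu 11 7 7) + (Eu 11 6 6 + Eu 11 6 6)
      + (Eu 11 7 7 + Eu 11 5 5) + (Eu 11 8 8 + Eu 11 4 4) + (Eu 11 9 9 + Eu 11 3 3)) := by
  have h : Finset.Icc 1 9 = ({1,2,3,4,5,6,7,8,9} : Finset ℕ) := by decide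
  simp [Hp, Hperp, show (((4:Fin 5)):ℕ) = 4 from rfl, h, Finset.sum_insert,
    Finset.mem_insert, Finset.mem_singleton]
  abel

set_option maxHeartbeats 2000000 in
lemma he (k l : Fin 5) : ⁅Hp k, Eh l⁆ = if k = l then Eh l else 0 := by
  fin_cases k <;> fin_cases l <;>
    simp [Hp0, Hp1, Hp2, Hp3, Hp4, Eh, Ring.lie_def, sub_mul, mul_sub, add_mul, mul_add,
      Eu_mul_Eu, smul_mul_assoc, mul_smul_comm] <;>
    abel

set_option maxHeartbeats 2000000 in
lemma hh (k l : Fin 5) : ⁅Hp k, Hp l⁆ = 0 := by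
  fin_cases k <;> fin_cases l <;>
    simp [Hp0, Hp1, Hp2, Hp3, Hp4, Ring.lie_def, sub_mul, mul_sub, add_mul, mul_add,
      Eu_mul_Eu, smul_mul_assoc, mul_smul_comm] <;>
    module

lemma ee (k l : Fin 5) : ⁅Eh k, Eh l⁆ = 0 := by
  fin_cases k <;> fin_cases l <;>
    simp [Eh, Ring.lie_def, sub_mul, mul_sub, add_mul, mul_add,
      Eu_mul_Eu, smul_mul_assoc, mul_smul_comm]

lemma eh (k l : Fin 5) : ⁅Eh k, Hp l⁆ = -(if k = l then Eh l else 0) := by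
  rw [← lie_skew, he]
  by_cases h : k = l
  · subst h; simp
  · simp [h, Ne.symm h]

set_option maxHeartbeats 4000000
set_option synthInstance.maxHeartbeats 1000000
set_option maxRecDepth 4000

/-- In `sl(11,ℂ)`, the Jordanian element
`r_J = Σ_{k=1}^5 (H_k^⊥ ⊗ Ê_k − Ê_k ⊗ H_k^⊥)` satisfies the classical
Yang–Baxter equation. -/
theorem stmt17 :
    cybe (R := ℂ) (Sum.elim Hp (fun k => -Eh k)) (Sum.elim Eh Hp) = 0 := by
  simp only [cybe, Fintype.sum_sum_type, Sum.elim_inl, Sum.elim_inr]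
  simp only [lie_neg, neg_lie, neg_neg, he, hh, ee, eh, Fin.sum_univ_five]
  simp only [Fin.reduceEq, reduceIte, TensorProduct.tmul_zero, TensorProduct.zero_tmul,
    TensorProduct.tmul_neg, TensorProduct.neg_tmul, neg_zero, neg_neg, add_zero, zero_add]
  abel
end
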